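/- arXiv:2408.05607 — 2 statements merged into one kernel-verified Lean document; each statement's English description precedes it below -/
import Mathlib

section
/- Let C be a category with finite colimits, S a finite set with |S| ≥ 2, and s ∈ S. For any punctured S-cube F : P_{≤|S|−1}(S) → C, the commutative square whose top-left corner is colim_{I ∈ P_{≤|S|−2}(S∖{s})} F(I), whose top-right corner is colim_{I ∈ P_{≤|S|−2}(S∖{s})} F(I ∪ {s}), whose bottom-left corner is F(S∖{s}), and whose bottom-right corner is colim_{I ∈ P_{≤|S|−1}(S)} F(I), with all maps the evident canonical comparison maps, is a pushout square in C. (Lemma 3.1.11.) -/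
open CategoryTheory CategoryTheory.Limits

/- Finite posets (with decidable order) are finite categories, so that the colimits below
exist in a category with finite colimits. -/
instance fintypeHomOfPreorder {α : Type} [Preorder α] [DecidableRel (α := α) (· ≤ ·)]
    (X Y : α) : Fintype (X ⟶ Y) :=
  if h : X ≤ Y then Fintype.ofSubsingleton (homOfLE h)
  else haveI : IsEmpty (X ⟶ Y) := ⟨fun g => h (leOfHom g)⟩; Fintype.ofIsEmpty

instance finCategoryOfPreorder {α : Type} [Preorder α] [Fintype α]
    [DecidableRel (α := α) (· ≤ ·)] : FinCategory α where

variable {C : Type*} [Category C] [HasFiniteColimits C]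
variable (S : Type) [Fintype S] [DecidableEq S]

/-- The punctured cube poset `P_{≤ |S| - 1}(S)` of subsets of `S` of cardinality `≤ |S| - 1`. -/
abbrev PuncturedCubePoset : Type := {I : Finset S // I.card ≤ Fintype.card S - 1}

/-- The poset `P_{≤ |S| - 2}(S ∖ {s})` of subsets of `S ∖ {s}` of cardinality `≤ |S| - 2`. -/
abbrev SmallCubePoset (s : S) : Type :=
  {I : Finset S // s ∉ I ∧ I.card ≤ Fintype.card S - 2}

variable {S}

/-- `I ↦ I`, as a functor `P_{≤|S|-2}(S∖{s}) ⥤ P_{≤|S|-1}(S)`. -/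
noncomputable def inclFunctor (hS : 2 ≤ Fintype.card S) (s : S) :
    SmallCubePoset S s ⥤ PuncturedCubePoset S :=
  Monotone.functor (f := fun I => ⟨I.1, by have := I.2.2; omega⟩)
    (fun _ _ h => by exact h)

/-- `I ↦ I ∪ {s}`, as a functor `P_{≤|S|-2}(S∖{s}) ⥤ P_{≤|S|-1}(S)`. -/
noncomputable def insertFunctor (hS : 2 ≤ Fintype.card S) (s : S) :
    SmallCubePoset S s ⥤ PuncturedCubePoset S :=
  Monotone.functor
    (f := fun I => ⟨insert s I.1, by
      rw [Finset.card_insert_of_notMem I.2.1]; have := I.2.2; omega⟩)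
    (fun _ _ h => by exact Finset.insert_subset_insert s h)

/-- The object `S ∖ {s}` of the punctured cube poset. -/
def erasePt (hS : 2 ≤ Fintype.card S) (s : S) : PuncturedCubePoset S :=
  ⟨Finset.univ.erase s, by rw [Finset.card_erase_of_mem (Finset.mem_univ s),
    Finset.card_univ]⟩

/-- The top map of the square, `colim_{I} F(I) ⟶ colim_{I} F(I ∪ {s})`, induced by the
natural transformation with components `F(I ⊆ I ∪ {s})`. -/
noncomputable def topMap (hS : 2 ≤ Fintype.card S) (s : S)
    (F : PuncturedCubePoset S ⥤ C) :
    colimit (inclFunctor hS s ⋙ F) ⟶ colimit (insertFunctor hS s ⋙ F) :=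
  colimMap
    { app := fun I => F.map (homOfLE (by
        exact (Finset.subset_insert s I.1 : I.1 ≤ insert s I.1)))
      naturality := fun I J g => by
        dsimp [inclFunctor, insertFunctor]
        rw [← F.map_comp, ← F.map_comp]
        congr 1 }

/-- The left map of the square, `colim_{I} F(I) ⟶ F(S ∖ {s})`. -/
noncomputable def leftMap (hS : 2 ≤ Fintype.card S) (s : S)
    (F : PuncturedCubePoset S ⥤ C) :
    colimit (inclFunctor hS s ⋙ F) ⟶ F.obj (erasePt hS s) :=
  colimit.desc (inclFunctor hS s ⋙ F)
    { pt := F.obj (erasePt hS s)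
      ι :=
        { app := fun I => F.map (homOfLE (by
            exact (Finset.subset_erase.mpr ⟨Finset.subset_univ _, I.2.1⟩ :
              I.1 ≤ Finset.univ.erase s)))
          naturality := fun I J g => by
            dsimp [inclFunctor, erasePt]
            rw [Category.comp_id, ← F.map_comp]
            congr 1 } }

/-- The right map of the square, `colim_{I} F(I ∪ {s}) ⟶ colim F`. -/
noncomputable def rightMap (hS : 2 ≤ Fintype.card S) (s : S)
    (F : PuncturedCubePoset S ⥤ C) :
    colimit (insertFunctor hS s ⋙ F) ⟶ colimit F :=
  colimit.pre F (insertFunctor hS s)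

/-- The bottom map of the square, `F(S ∖ {s}) ⟶ colim F`. -/
noncomputable def bottomMap (hS : 2 ≤ Fintype.card S) (s : S)
    (F : PuncturedCubePoset S ⥤ C) :
    F.obj (erasePt hS s) ⟶ colimit F :=
  colimit.ι F (erasePt hS s)

/-! A cocone on `F` is a compatible pair of cocones on the two halves `{J | s ∈ J}` and
`{J | s ∉ J}` of the punctured cube. The first half is isomorphic to `P_{≤|S|-2}(S∖{s})` via
`I ↦ I ∪ {s}`, the second has the greatest element `S ∖ {s}`, and a relation `J ⊆ K` with
`s ∉ J`, `s ∈ K` factors through `J ⊆ J ∪ {s}` with `J ∈ P_{≤|S|-2}(S∖{s})`. So compatibility is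
exactly commutativity of the square, which makes the square a pushout. -/

def coconeOfLE {P : Type*} [Preorder P] {D : Type*} [Category D] (F : P ⥤ D) {W : D}
    (app : ∀ J, F.obj J ⟶ W) (h : ∀ J K (hJK : J ≤ K), F.map hJK.hom ≫ app K = app J) :
    Cocone F where
  pt := W
  ι := { app, naturality := fun J K f => by rw [← homOfLE_leOfHom f]; simpa using h J K f.le }

def smallErase (s : S) (J : PuncturedCubePoset S) (h : s ∈ J.1) : SmallCubePoset S s :=
  ⟨J.1.erase s, Finset.notMem_erase s J.1, by
    rw [Finset.card_erase_of_mem h]; have := J.2; omega⟩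

def smallOfLE (s : S) {J K : PuncturedCubePoset S} (hJ : s ∉ J.1) (hK : s ∈ K.1)
    (hJK : J ≤ K) : SmallCubePoset S s :=
  ⟨J.1, hJ, by
    have := Finset.card_le_card (Finset.subset_erase.mpr ⟨hJK, hJ⟩)
    rw [Finset.card_erase_of_mem hK] at this
    have := K.2; omega⟩

section

variable (hS : 2 ≤ Fintype.card S) (s : S)

lemma le_insertFunctor_obj_smallErase (J : PuncturedCubePoset S) (h : s ∈ J.1) :
    J ≤ (insertFunctor hS s).obj (smallErase s J h) :=
  (Finset.insert_erase h).symm.le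

lemma le_erasePt {J : PuncturedCubePoset S} (h : s ∉ J.1) : J ≤ erasePt hS s :=
  Finset.subset_erase.mpr ⟨Finset.subset_univ _, h⟩

lemma inclFunctor_obj_le_insertFunctor_obj (I : SmallCubePoset S s) :
    (inclFunctor hS s).obj I ≤ (insertFunctor hS s).obj I :=
  Finset.subset_insert s I.1

variable (F : PuncturedCubePoset S ⥤ C)

lemma ι_topMap (I : SmallCubePoset S s) :
    colimit.ι (inclFunctor hS s ⋙ F) I ≫ topMap hS s F =
      F.map (inclFunctor_obj_le_insertFunctor_obj hS s I).hom ≫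
        colimit.ι (insertFunctor hS s ⋙ F) I :=
  ι_colimMap _ _

lemma ι_leftMap (I : SmallCubePoset S s) :
    colimit.ι (inclFunctor hS s ⋙ F) I ≫ leftMap hS s F =
      F.map (le_erasePt hS s I.2.1 : (inclFunctor hS s).obj I ≤ _).hom :=
  colimit.ι_desc _ _

lemma topMap_comp_rightMap :
    topMap hS s F ≫ rightMap hS s F = leftMap hS s F ≫ bottomMap hS s F := by
  refine colimit.hom_ext fun I => ?_
  rw [← Category.assoc, ι_topMap, ← Category.assoc, ι_leftMap, Category.assoc, rightMap,
    colimit.ι_pre, bottomMap]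
  exact (colimit.w F _).trans (colimit.w F _).symm

variable {F} {W : C} (g₁ : colimit (insertFunctor hS s ⋙ F) ⟶ W) (g₂ : F.obj (erasePt hS s) ⟶ W)

noncomputable def pushoutDescApp (J : PuncturedCubePoset S) : F.obj J ⟶ W :=
  if h : s ∈ J.1 then
    F.map (le_insertFunctor_obj_smallErase hS s J h).hom ≫
      colimit.ι (insertFunctor hS s ⋙ F) (smallErase s J h) ≫ g₁
  else F.map (le_erasePt hS s h).hom ≫ g₂

lemma map_comp_pushoutDescApp_of_mem {K : PuncturedCubePoset S} (hK : s ∈ K.1)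
    (I : SmallCubePoset S s) (hIK : I.1 ⊆ K.1) {X : PuncturedCubePoset S}
    (hXI : X ≤ (insertFunctor hS s).obj I) (hXK : X ≤ K) :
    F.map hXK.hom ≫ pushoutDescApp hS s g₁ g₂ K =
      F.map hXI.hom ≫ colimit.ι (insertFunctor hS s ⋙ F) I ≫ g₁ := by
  have hI : I ≤ smallErase s K hK := Finset.subset_erase.mpr ⟨hIK, I.2.1⟩
  rw [pushoutDescApp, dif_pos hK, ← colimit.w (insertFunctor hS s ⋙ F) hI.hom,
    Functor.comp_map]
  simp only [← Category.assoc, ← F.map_comp]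
  rfl

variable {hS s g₁ g₂} (hw : topMap hS s F ≫ g₁ = leftMap hS s F ≫ g₂)
include hw

lemma map_comp_ι_comp_eq_of_condition (I : SmallCubePoset S s) :
    F.map (inclFunctor_obj_le_insertFunctor_obj hS s I).hom ≫
        colimit.ι (insertFunctor hS s ⋙ F) I ≫ g₁ =
      F.map (le_erasePt hS s I.2.1 : (inclFunctor hS s).obj I ≤ _).hom ≫ g₂ := by
  rw [← Category.assoc, ← ι_topMap, Category.assoc, hw, ← Category.assoc, ι_leftMap]

lemma map_comp_pushoutDescApp (J K : PuncturedCubePoset S) (hJK : J ≤ K) :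
    F.map hJK.hom ≫ pushoutDescApp hS s g₁ g₂ K = pushoutDescApp hS s g₁ g₂ J := by
  by_cases hK : s ∈ K.1
  · by_cases hJ : s ∈ J.1
    · rw [map_comp_pushoutDescApp_of_mem hS s g₁ g₂ hK (smallErase s J hJ)
        (Finset.erase_subset s J.1 |>.trans hJK) (le_insertFunctor_obj_smallErase hS s J hJ),
        pushoutDescApp, dif_pos hJ]
    · rw [map_comp_pushoutDescApp_of_mem hS s g₁ g₂ hK (smallOfLE s hJ hK hJK) hJK
        (Finset.subset_insert s J.1), pushoutDescApp, dif_neg hJ]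
      exact map_comp_ι_comp_eq_of_condition hw (smallOfLE s hJ hK hJK)
  · have hJ : s ∉ J.1 := fun h => hK (hJK h)
    rw [pushoutDescApp, pushoutDescApp, dif_neg hJ, dif_neg hK, ← Category.assoc, ← F.map_comp]
    rfl

noncomputable def pushoutDesc : colimit F ⟶ W :=
  colimit.desc F (coconeOfLE F (pushoutDescApp hS s g₁ g₂) (map_comp_pushoutDescApp hw))

lemma ι_pushoutDesc (J : PuncturedCubePoset S) :
    colimit.ι F J ≫ pushoutDesc hw = pushoutDescApp hS s g₁ g₂ J :=
  colimit.ι_desc _ _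

lemma rightMap_comp_pushoutDesc : rightMap hS s F ≫ pushoutDesc hw = g₁ := by
  refine colimit.hom_ext fun I => ?_
  rw [rightMap, colimit.ι_pre_assoc, ι_pushoutDesc,
    ← Category.id_comp (pushoutDescApp hS s g₁ g₂ _), ← F.map_id, ← homOfLE_refl le_rfl,
    map_comp_pushoutDescApp_of_mem hS s g₁ g₂ (Finset.mem_insert_self s I.1) I
      (Finset.subset_insert s I.1) le_rfl, homOfLE_refl, F.map_id, Category.id_comp]

lemma bottomMap_comp_pushoutDesc : bottomMap hS s F ≫ pushoutDesc hw = g₂ := by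
  have hs : s ∉ (erasePt hS s).1 := Finset.notMem_erase s _
  rw [bottomMap, ι_pushoutDesc, pushoutDescApp, dif_neg hs, homOfLE_refl, F.map_id,
    Category.id_comp]

end

variable (hS : 2 ≤ Fintype.card S) (s : S) {F : PuncturedCubePoset S ⥤ C} in
lemma colimit_hom_ext_of_rightMap_bottomMap {W : C} {m m' : colimit F ⟶ W}
    (h₁ : rightMap hS s F ≫ m = rightMap hS s F ≫ m')
    (h₂ : bottomMap hS s F ≫ m = bottomMap hS s F ≫ m') : m = m' := by
  refine colimit.hom_ext fun J => ?_
  by_cases hJ : s ∈ J.1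
  · have hι : colimit.ι F ((insertFunctor hS s).obj (smallErase s J hJ)) =
        colimit.ι (insertFunctor hS s ⋙ F) _ ≫ rightMap hS s F := (colimit.ι_pre _ _ _).symm
    rw [← colimit.w F (le_insertFunctor_obj_smallErase hS s J hJ).hom, Category.assoc,
      Category.assoc, hι, Category.assoc, Category.assoc, h₁]
  · rw [← colimit.w F (le_erasePt hS s hJ).hom, Category.assoc, Category.assoc]
    exact congrArg _ h₂

/-- **Lemma 3.1.11.** For a category `C` with finite colimits, a finite set `S` with
`|S| ≥ 2`, an element `s ∈ S` and a punctured `S`-cube `F : P_{≤|S|-1}(S) ⥤ C`, the square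

`colim_{I ∈ P_{≤|S|-2}(S∖{s})} F(I) ⟶ colim_{I ∈ P_{≤|S|-2}(S∖{s})} F(I ∪ {s})`
`          ↓                                        ↓`
`      F(S ∖ {s})          ⟶          colim_{I ∈ P_{≤|S|-1}(S)} F(I)`

of canonical comparison maps is a pushout square in `C`. -/
theorem punctured_cube_colimit_isPushout
    (hS : 2 ≤ Fintype.card S) (s : S) (F : PuncturedCubePoset S ⥤ C) :
    IsPushout (topMap hS s F) (leftMap hS s F) (rightMap hS s F) (bottomMap hS s F) := by
  refine IsPushout.of_isColimit (PushoutCocone.IsColimit.mk (topMap_comp_rightMap hS s F)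
    (fun c => pushoutDesc c.condition) (fun c => rightMap_comp_pushoutDesc c.condition)
    (fun c => bottomMap_comp_pushoutDesc c.condition)
    (fun c m h₁ h₂ => colimit_hom_ext_of_rightMap_bottomMap hS s ?_ ?_))
  · rw [h₁, rightMap_comp_pushoutDesc]
  · rw [h₂, bottomMap_comp_pushoutDesc]
end

section
/- Let C be a category with finite limits. For i = 1, 2 let S_i be a finite set and F_i : P(S_i) → C a strongly Cartesian S_i-cube, i.e., F_i is a pointwise right Kan extension of its restriction to the full subposet P_{≥|S_i|−1}(S_i) of subsets of cardinality ≥ |S_i|−1 along the inclusion P_{≥|S_i|−1}(S_i) ↪ P(S_i). Let S = S_1 ⊔ S_2 and define the S-cube F_1 □ F_2 : P(S) → C by (F_1 □ F_2)(I) = F_1(I ∩ S_1) × F_2(I ∩ S_2), with structure maps induced by those of F_1 and F_2. Then F_1 □ F_2 is strongly Cartesian; equivalently, for every I ⊆ S the canonical map (F_1 □ F_2)(I) → lim_{J ∈ P_{≥|S|−1}(S), J ⊇ I} (F_1 □ F_2)(J) is an isomorphism. (Lemma 3.1.8, for the Cartesian monoidal structure.) -/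
open CategoryTheory CategoryTheory.Limits

variable {C : Type*} [Category C] [HasFiniteLimits C]

section StronglyCartesian

variable {α : Type} [Fintype α] [DecidableEq α]

/-- The poset `P_{≥ |α| - 1}(α)_{I/}` of subsets of `α` of cardinality `≥ |α| - 1`
containing `I`. -/
abbrev CornerPoset (I : Finset α) : Type :=
  {J : Finset α // I ≤ J ∧ Fintype.card α - 1 ≤ J.card}

/-- The restriction of a cube `F : P(α) ⥤ C` to the subsets of cardinality `≥ |α| - 1`
containing `I`. -/
noncomputable def cornerDiagram (F : Finset α ⥤ C) (I : Finset α) :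
    CornerPoset I ⥤ C :=
  Monotone.functor (f := fun J => (J.1 : Finset α)) (fun _ _ h => h) ⋙ F

/-- The canonical map `F(I) ⟶ lim_{J ∈ P_{≥|α|-1}(α), J ⊇ I} F(J)`; the cube `F` is strongly
Cartesian precisely if this map is an isomorphism for every `I`. -/
noncomputable def stronglyCartesianComparison (F : Finset α ⥤ C) (I : Finset α) :
    F.obj I ⟶ limit (cornerDiagram F I) :=
  limit.lift (cornerDiagram F I)
    { pt := F.obj I
      π :=
        { app := fun J => F.map (homOfLE J.2.1)
          naturality := fun J J' g => by
            dsimp [cornerDiagram]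
            rw [Category.id_comp, ← F.map_comp]
            congr 1 } }

/-- An `α`-cube `F : P(α) ⥤ C` is *strongly Cartesian* if it is a pointwise right Kan
extension of its restriction to `P_{≥|α|-1}(α)`; equivalently (and this is the formulation
used here), if for every `I ⊆ α` the canonical map
`F(I) ⟶ lim_{J ∈ P_{≥|α|-1}(α), J ⊇ I} F(J)` is an isomorphism. -/
def StronglyCartesian (F : Finset α ⥤ C) : Prop :=
  ∀ I : Finset α, IsIso (stronglyCartesianComparison F I)

end StronglyCartesian

variable {S₁ S₂ : Type} [Fintype S₁] [DecidableEq S₁] [Fintype S₂] [DecidableEq S₂]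

/-- `I ↦ I ∩ S₁`, as a functor `P(S₁ ⊔ S₂) ⥤ P(S₁)`. -/
noncomputable def interLeft : Finset (S₁ ⊕ S₂) ⥤ Finset S₁ :=
  Monotone.functor (f := fun I => I.preimage Sum.inl Sum.inl_injective.injOn)
    (Finset.monotone_preimage Sum.inl_injective)

/-- `I ↦ I ∩ S₂`, as a functor `P(S₁ ⊔ S₂) ⥤ P(S₂)`. -/
noncomputable def interRight : Finset (S₁ ⊕ S₂) ⥤ Finset S₂ :=
  Monotone.functor (f := fun I => I.preimage Sum.inr Sum.inr_injective.injOn)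
    (Finset.monotone_preimage Sum.inr_injective)

/-- The external product of two cubes: the `(S₁ ⊔ S₂)`-cube
`(F₁ □ F₂)(I) = F₁(I ∩ S₁) × F₂(I ∩ S₂)`. -/
noncomputable def cubeProd (F₁ : Finset S₁ ⥤ C) (F₂ : Finset S₂ ⥤ C) :
    Finset (S₁ ⊕ S₂) ⥤ C :=
  Functor.prod' (interLeft ⋙ F₁) (interRight ⋙ F₂) ⋙ Functor.uncurry.obj prod.functor

/-! A subset `J ⊇ I` of `S = S₁ ⊔ S₂` with `|J| ≥ |S| - 1` misses at most one point, so its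
traces `J ∩ Sᵢ` are again corner subsets, now of `Sᵢ`. Taking traces, `J ↦ J ∩ S₁`, is left
adjoint to `K ↦ K ⊔ S₂` between the corner posets of `I` and of `I ∩ S₁` (and symmetrically for
`S₂`), hence an initial functor: restricting the limit cone `Fᵢ(I ∩ Sᵢ)` along it gives again a
limit cone. The corner diagram of `F₁ □ F₂` is the pointwise product of the two restricted
diagrams, and a pointwise product of limit cones is a limit cone. -/

namespace Finset

variable {α β : Type*} [Fintype α] [DecidableEq α]

theorem card_sub_one_le_card_iff_card_compl_le_one (J : Finset α) :
    Fintype.card α - 1 ≤ #J ↔ #Jᶜ ≤ 1 := by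
  have := J.card_le_univ
  rw [card_compl]
  omega

theorem preimage_subset_iff_subset_compl_map_compl [Fintype β] [DecidableEq β] {f : α → β}
    (hf : f.Injective) (J : Finset β) (K : Finset α) :
    J.preimage f hf.injOn ⊆ K ↔ J ⊆ (Kᶜ.map ⟨f, hf⟩)ᶜ := by
  simp only [subset_iff, mem_preimage, mem_compl, mem_map, Function.Embedding.coeFn_mk]
  grind

end Finset

namespace CornerPoset

variable {α β : Type} [Fintype α] [DecidableEq α] [Fintype β] [DecidableEq β]
  {f : α → β} (hf : f.Injective) (I : Finset β)

noncomputable def preimage (J : CornerPoset I) : CornerPoset (I.preimage f hf.injOn) :=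
  ⟨J.1.preimage f hf.injOn, Finset.monotone_preimage hf J.2.1, by
    rw [Finset.card_sub_one_le_card_iff_card_compl_le_one, ← Finset.preimage_compl _ hf]
    exact (Finset.card_le_card_of_injOn f (fun _ ha => Finset.mem_preimage.1 ha) hf.injOn).trans
      ((Finset.card_sub_one_le_card_iff_card_compl_le_one _).1 J.2.2)⟩

/-- `K ↦ {b | f⁻¹ b ⊆ K}`, the right adjoint of the preimage (cf. `Set.kernImage`). -/
noncomputable def kernImage (K : CornerPoset (I.preimage f hf.injOn)) : CornerPoset I :=
  ⟨(K.1ᶜ.map ⟨f, hf⟩)ᶜ, (Finset.preimage_subset_iff_subset_compl_map_compl hf I K.1).1 K.2.1, by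
    rw [Finset.card_sub_one_le_card_iff_card_compl_le_one, compl_compl, Finset.card_map,
      ← Finset.card_sub_one_le_card_iff_card_compl_le_one]
    exact K.2.2⟩

theorem gc_preimage_kernImage : GaloisConnection (preimage hf I) (kernImage hf I) :=
  fun J K => Finset.preimage_subset_iff_subset_compl_map_compl hf J.1 K.1

noncomputable def preimageFunctor : CornerPoset I ⥤ CornerPoset (I.preimage f hf.injOn) :=
  (gc_preimage_kernImage hf I).monotone_l.functor

instance initial_preimageFunctor : (preimageFunctor hf I).Initial :=
  Functor.initial_of_adjunction (gc_preimage_kernImage hf I).adjunction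

end CornerPoset

namespace CategoryTheory.Limits

variable {J D : Type*} [Category J] [Category D] [HasBinaryProducts D] {G₁ G₂ : J ⥤ D}

/- Reducible, so that `simp` sees its objects as binary products; `Functor.uncurry.obj
prod.functor` is not, and maps `(f, g)` to `prod.map f 𝟙 ≫ prod.map 𝟙 g`. -/
noncomputable abbrev pointwiseProd (G₁ G₂ : J ⥤ D) : J ⥤ D where
  obj j := G₁.obj j ⨯ G₂.obj j
  map g := prod.map (G₁.map g) (G₂.map g)

noncomputable def prod'CompUncurryProdIso (G₁ G₂ : J ⥤ D) :
    Functor.prod' G₁ G₂ ⋙ Functor.uncurry.obj prod.functor ≅ pointwiseProd G₁ G₂ :=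
  NatIso.ofComponents (fun _ => Iso.refl _) fun g => by simp [Functor.uncurry, prod.functor]

noncomputable abbrev prodCone (c₁ : Cone G₁) (c₂ : Cone G₂) : Cone (pointwiseProd G₁ G₂) where
  pt := c₁.pt ⨯ c₂.pt
  π := { app j := prod.map (c₁.π.app j) (c₂.π.app j) }

noncomputable abbrev Cone.prodFst (s : Cone (pointwiseProd G₁ G₂)) : Cone G₁ where
  pt := s.pt
  π :=
    { app j := s.π.app j ≫ prod.fst
      naturality _ _ g := by rw [← s.w g]; simp }

noncomputable abbrev Cone.prodSnd (s : Cone (pointwiseProd G₁ G₂)) : Cone G₂ where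
  pt := s.pt
  π :=
    { app j := s.π.app j ≫ prod.snd
      naturality _ _ g := by rw [← s.w g]; simp }

noncomputable def isLimitProdCone {c₁ : Cone G₁} {c₂ : Cone G₂} (h₁ : IsLimit c₁)
    (h₂ : IsLimit c₂) : IsLimit (prodCone c₁ c₂) where
  lift s := prod.lift (h₁.lift s.prodFst) (h₂.lift s.prodSnd)
  fac s j := by
    apply prod.hom_ext <;>
      simp only [Category.assoc, prod.map_fst, prod.map_snd, prod.lift_fst_assoc,
        prod.lift_snd_assoc, IsLimit.fac]
  uniq s m hm := by
    apply prod.hom_ext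
    · rw [prod.lift_fst]
      exact h₁.uniq s.prodFst _ fun j => by simp [← hm j]
    · rw [prod.lift_snd]
      exact h₂.uniq s.prodSnd _ fun j => by simp [← hm j]

end CategoryTheory.Limits

section CornerCone

variable {α : Type} [Fintype α] [DecidableEq α]

noncomputable def cornerCone (F : Finset α ⥤ C) (I : Finset α) : Cone (cornerDiagram F I) where
  pt := F.obj I
  π :=
    { app := fun J => F.map (homOfLE J.2.1)
      naturality := fun _ _ _ => by
        dsimp [cornerDiagram]
        rw [Category.id_comp, ← F.map_comp]
        rfl }

theorem isIso_stronglyCartesianComparison_iff (F : Finset α ⥤ C) (I : Finset α) :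
    IsIso (stronglyCartesianComparison F I) ↔ Nonempty (IsLimit (cornerCone F I)) :=
  (IsLimit.nonempty_isLimit_iff_isIso_lift (limit.isLimit _)).symm

theorem StronglyCartesian.nonempty_isLimit_whisker_preimageFunctor {β : Type} [Fintype β]
    [DecidableEq β] {F : Finset α ⥤ C} (hF : StronglyCartesian F) {f : α → β}
    (hf : f.Injective) (I : Finset β) :
    Nonempty (IsLimit ((cornerCone F _).whisker (CornerPoset.preimageFunctor hf I))) :=
  ((isIso_stronglyCartesianComparison_iff F _).1 (hF _)).map
    (Functor.Initial.isLimitWhiskerEquiv _ _).symm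

end CornerCone

theorem cubeProd_map {T₁ T₂ : Type} (F₁ : Finset T₁ ⥤ C) (F₂ : Finset T₂ ⥤ C)
    {J J' : Finset (T₁ ⊕ T₂)} (f : J ⟶ J') :
    (cubeProd F₁ F₂).map f = prod.map (F₁.map (interLeft.map f)) (F₂.map (interRight.map f)) := by
  simp [cubeProd, Functor.uncurry, prod.functor]

noncomputable def isLimitCornerConeCubeProd {F₁ : Finset S₁ ⥤ C} {F₂ : Finset S₂ ⥤ C}
    {I : Finset (S₁ ⊕ S₂)}
    (l₁ : IsLimit ((cornerCone F₁ _).whisker (CornerPoset.preimageFunctor Sum.inl_injective I)))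
    (l₂ : IsLimit ((cornerCone F₂ _).whisker (CornerPoset.preimageFunctor Sum.inr_injective I))) :
    IsLimit (cornerCone (cubeProd F₁ F₂) I) :=
  (IsLimit.postcomposeHomEquiv (prod'CompUncurryProdIso
      (CornerPoset.preimageFunctor Sum.inl_injective I ⋙ cornerDiagram F₁ _)
      (CornerPoset.preimageFunctor Sum.inr_injective I ⋙ cornerDiagram F₂ _)) _).1
    ((isLimitProdCone l₁ l₂).ofIsoLimit (Cone.ext (Iso.refl _) fun _ =>
      (cubeProd_map F₁ F₂ _).symm.trans
        ((Category.comp_id _).symm.trans (Category.id_comp _).symm)))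

/-- **Lemma 3.1.8** (Cartesian monoidal structure). If `F₁` and `F₂` are strongly Cartesian
cubes in a category with finite limits, then the cube
`(F₁ □ F₂)(I) = F₁(I ∩ S₁) × F₂(I ∩ S₂)` on `S = S₁ ⊔ S₂` is strongly Cartesian: for every
`I ⊆ S` the canonical map `(F₁ □ F₂)(I) ⟶ lim_{J ∈ P_{≥|S|-1}(S), J ⊇ I} (F₁ □ F₂)(J)` is
an isomorphism. -/
theorem cubeProd_stronglyCartesian (F₁ : Finset S₁ ⥤ C) (F₂ : Finset S₂ ⥤ C)
    (h₁ : StronglyCartesian F₁) (h₂ : StronglyCartesian F₂) :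
    StronglyCartesian (cubeProd F₁ F₂) := by
  intro I
  obtain ⟨l₁⟩ := h₁.nonempty_isLimit_whisker_preimageFunctor Sum.inl_injective I
  obtain ⟨l₂⟩ := h₂.nonempty_isLimit_whisker_preimageFunctor Sum.inr_injective I
  exact (isIso_stronglyCartesianComparison_iff _ I).2 ⟨isLimitCornerConeCubeProd l₁ l₂⟩
end
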